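/- arXiv:2102.07201 — 3 statements merged into one kernel-verified Lean document; each statement's English description precedes it below -/
import Mathlib

section
/- For all integers n ≥ 1 and real numbers 0 < r < R, the integral ∫_{-π}^{π} (-1/(2π)) · (2Rr - (R² + r²)cos(t_x - t)) / (R² + r² - 2Rr·cos(t_x - t))² · cos(n(t_z - t)) dt equals (n/(2Rr)) · (r/R)ⁿ · cos(n(t_z - t_x)). -/
open Real intervalIntegral

lemma keysum (ρ θ : ℝ) (h0 : 0 ≤ ρ) (h1 : ρ < 1) :
    HasSum (fun k : ℕ => (k : ℝ) * ρ ^ k * Real.cos (k * θ))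
      (ρ * ((1 + ρ ^ 2) * Real.cos θ - 2 * ρ) /
        (1 - 2 * ρ * Real.cos θ + ρ ^ 2) ^ 2) := by
  set z : ℂ := ρ * Complex.exp (θ * Complex.I) with hz
  have hnz : ‖z‖ = ρ := by
    simp [hz, map_mul, Complex.norm_exp_ofReal_mul_I, Complex.norm_real,
      abs_of_nonneg h0]
  have hlt : ‖z‖ < 1 := by rw [hnz]; exact h1
  have H := hasSum_coe_mul_geometric_of_norm_lt_one (𝕜 := ℂ) hlt
  have H2 := Complex.reCLM.hasSum H
  have hterm : ∀ k : ℕ, Complex.reCLM ((k : ℂ) * z ^ k) = (k : ℝ) * ρ ^ k * Real.cos (k * θ) := by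
    intro k
    have hzk : z ^ k = (ρ : ℂ) ^ k * Complex.exp ((k * θ : ℝ) * Complex.I) := by
      rw [hz, mul_pow, ← Complex.exp_nat_mul]
      push_cast; ring_nf
    have hzk2 : (k:ℂ) * z ^ k = ((k * ρ ^ k : ℝ) : ℂ) * Complex.exp ((k * θ : ℝ) * Complex.I) := by
      rw [hzk]; push_cast; ring
    rw [Complex.reCLM_apply, hzk2, Complex.re_ofReal_mul, Complex.exp_ofReal_mul_I_re]
  have hre : Complex.reCLM (z / (1 - z) ^ 2)
      = ρ * ((1 + ρ ^ 2) * Real.cos θ - 2 * ρ) / (1 - 2 * ρ * Real.cos θ + ρ ^ 2) ^ 2 := by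
    have hzre : z.re = ρ * Real.cos θ := by
      simp [hz, Complex.exp_ofReal_mul_I_re]
    have hzim : z.im = ρ * Real.sin θ := by
      simp [hz, Complex.exp_ofReal_mul_I_im]
    have hD : Complex.normSq (1 - z) = 1 - 2 * ρ * Real.cos θ + ρ ^ 2 := by
      simp [Complex.normSq_apply, Complex.sub_re, Complex.sub_im, hzre, hzim]
      nlinarith [sin_sq_add_cos_sq θ]
    have hpos : (0:ℝ) < 1 - 2 * ρ * Real.cos θ + ρ ^ 2 := by
      nlinarith [neg_one_le_cos θ, cos_le_one θ, sq_nonneg (1 - ρ)]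
    rw [Complex.reCLM_apply, Complex.div_re]
    rw [map_pow, hD]
    have hre2 : ((1 - z) ^ 2).re = (1 - ρ * Real.cos θ) ^ 2 - (ρ * Real.sin θ) ^ 2 := by
      simp [pow_two, Complex.mul_re, Complex.sub_re, Complex.sub_im, hzre, hzim]
    have him2 : ((1 - z) ^ 2).im = 2 * (1 - ρ * Real.cos θ) * (-(ρ * Real.sin θ)) := by
      simp [pow_two, Complex.mul_im, Complex.sub_re, Complex.sub_im, hzre, hzim]; ring
    have hs : Real.sin θ ^ 2 = 1 - Real.cos θ ^ 2 := by nlinarith [sin_sq_add_cos_sq θ]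
    have hnum : ρ * Real.cos θ * ((1 - ρ * Real.cos θ) ^ 2 - (ρ * Real.sin θ) ^ 2)
        + ρ * Real.sin θ * (2 * (1 - ρ * Real.cos θ) * (-(ρ * Real.sin θ)))
        = ρ * ((1 + ρ ^ 2) * Real.cos θ - 2 * ρ) := by
      linear_combination (ρ ^ 3 * Real.cos θ - 2 * ρ ^ 2) * hs
    rw [hre2, him2, hzre, hzim, ← add_div, hnum]
  rw [← hre]
  simp only [hterm] at H2
  exact H2

lemma intcos_zero (m : ℤ) (hm : m ≠ 0) (c : ℝ) :
    ∫ t in (-π)..π, Real.cos (c - m * t) = 0 := by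
  have hm' : (m : ℝ) ≠ 0 := by exact_mod_cast hm
  have key : ∀ t : ℝ, HasDerivAt (fun t : ℝ => -(Real.sin (c - m * t) / m))
      (Real.cos (c - m * t)) t := by
    intro t
    have h1 : HasDerivAt (fun t : ℝ => c - m * t) (-(m : ℝ)) t := by
      simpa using ((hasDerivAt_id t).const_mul (m : ℝ)).const_sub c
    have h2 := (Real.hasDerivAt_sin (c - m * t)).comp t h1
    have h3 := (h2.div_const (m : ℝ)).neg
    refine HasDerivAt.congr_deriv h3 ?_
    field_simp
  rw [intervalIntegral.integral_eq_sub_of_hasDerivAt (fun t _ => key t)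
    (by apply Continuous.intervalIntegrable; continuity)]
  simp [Real.sin_sub, Real.sin_add, Real.sin_int_mul_pi]

lemma prodint (k n : ℕ) (hn : 1 ≤ n) (a b : ℝ) :
    ∫ t in (-π)..π, Real.cos (k * (a - t)) * Real.cos (n * (b - t))
      = if k = n then π * Real.cos (n * a - n * b) else 0 := by
  set m1 : ℤ := (k : ℤ) - (n : ℤ) with hm1
  set m2 : ℤ := (k : ℤ) + (n : ℤ) with hm2
  have hpt : ∀ t : ℝ, Real.cos (k * (a - t)) * Real.cos (n * (b - t))
      = (Real.cos ((k * a - n * b) - (m1 : ℝ) * t)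
        + Real.cos ((k * a + n * b) - (m2 : ℝ) * t)) / 2 := by
    intro t
    have h := Real.two_mul_cos_mul_cos (k * (a - t)) (n * (b - t))
    have e1 : (k : ℝ) * (a - t) - n * (b - t) = (k * a - n * b) - (m1 : ℝ) * t := by
      rw [hm1]; push_cast; ring
    have e2 : (k : ℝ) * (a - t) + n * (b - t) = (k * a + n * b) - (m2 : ℝ) * t := by
      rw [hm2]; push_cast; ring
    rw [e1, e2] at h
    linarith
  simp only [hpt]
  rw [intervalIntegral.integral_div, intervalIntegral.integral_add
    (by apply Continuous.intervalIntegrable; continuity)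
    (by apply Continuous.intervalIntegrable; continuity)]
  have h2 : ∫ t in (-π)..π, Real.cos ((k * a + n * b) - (m2 : ℝ) * t) = 0 := by
    apply intcos_zero; omega
  rw [h2]
  by_cases hkn : k = n
  · subst hkn
    have e3 : ∀ t : ℝ, ((k : ℝ) * a - k * b) - (m1 : ℝ) * t = k * a - k * b := by
      intro t; rw [hm1]; push_cast; ring
    simp only [e3]
    rw [intervalIntegral.integral_const]
    simp only [if_true, smul_eq_mul]
    ring
  · rw [intcos_zero m1 (by omega)]
    simp [hkn]

theorem stmt0 (n : ℕ) (hn : 1 ≤ n) (r R t_x t_z : ℝ) (hr : 0 < r) (hR : r < R) :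
    ∫ t in (-π)..π,
      (-1 / (2 * π)) * (2 * R * r - (R ^ 2 + r ^ 2) * Real.cos (t_x - t)) /
        (R ^ 2 + r ^ 2 - 2 * R * r * Real.cos (t_x - t)) ^ 2 * Real.cos (n * (t_z - t))
    = (n / (2 * R * r)) * (r / R) ^ n * Real.cos (n * (t_z - t_x)) := by
  have hRpos : 0 < R := hr.trans hR
  have hR0 : R ≠ 0 := ne_of_gt hRpos
  have hr0 : r ≠ 0 := ne_of_gt hr
  set ρ : ℝ := r / R with hρ
  have hρ0 : 0 ≤ ρ := le_of_lt (div_pos hr hRpos)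
  have hρ1 : ρ < 1 := (div_lt_one hRpos).mpr hR
  set c : ℝ := 1 / (2 * π * R * r) with hc
  set F : ℕ → ℝ → ℝ := fun k t =>
    (c * ((k : ℝ) * ρ ^ k)) * (Real.cos (k * (t_x - t)) * Real.cos (n * (t_z - t))) with hF
  set f : ℝ → ℝ := fun t =>
    (-1 / (2 * π)) * (2 * R * r - (R ^ 2 + r ^ 2) * Real.cos (t_x - t)) /
      (R ^ 2 + r ^ 2 - 2 * R * r * Real.cos (t_x - t)) ^ 2 * Real.cos (n * (t_z - t)) with hf
  have hDpos : ∀ θ : ℝ, (0:ℝ) < 1 - 2 * ρ * Real.cos θ + ρ ^ 2 := by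
    intro θ
    nlinarith [neg_one_le_cos θ, cos_le_one θ, sq_nonneg (1 - ρ), sq_nonneg (1 + ρ)]
  -- pointwise Fourier expansion
  have hpt : ∀ t : ℝ, HasSum (fun k => F k t) (f t) := by
    intro t
    have h := (keysum ρ (t_x - t) hρ0 hρ1).mul_right (c * Real.cos (n * (t_z - t)))
    have hfun : (fun k : ℕ => ((k:ℝ) * ρ ^ k * Real.cos (k * (t_x - t)))
        * (c * Real.cos (n * (t_z - t)))) = fun k => F k t := by
      funext k; rw [hF]; ring
    rw [hfun] at h
    have hD := hDpos (t_x - t)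
    have heq : ρ * ((1 + ρ ^ 2) * Real.cos (t_x - t) - 2 * ρ) /
          (1 - 2 * ρ * Real.cos (t_x - t) + ρ ^ 2) ^ 2 * (c * Real.cos (n * (t_z - t)))
        = (-1 / (2 * π)) * (2 * R * r - (R ^ 2 + r ^ 2) * Real.cos (t_x - t)) /
            (R ^ 2 + r ^ 2 - 2 * R * r * Real.cos (t_x - t)) ^ 2 * Real.cos (n * (t_z - t)) := by
      have hden : R ^ 2 + r ^ 2 - 2 * R * r * Real.cos (t_x - t)
          = R ^ 2 * (1 - 2 * ρ * Real.cos (t_x - t) + ρ ^ 2) := by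
        rw [hρ]; field_simp; ring
      have hnum : 2 * R * r - (R ^ 2 + r ^ 2) * Real.cos (t_x - t)
          = -(R ^ 2 * ((1 + ρ ^ 2) * Real.cos (t_x - t) - 2 * ρ)) := by
        rw [hρ]; field_simp; ring
      have hcρ : ρ * c = 1 / (2 * π * R ^ 2) := by
        rw [hρ, hc]
        have hπ : π ≠ 0 := Real.pi_ne_zero
        field_simp
      have hE : (1 - 2 * ρ * Real.cos (t_x - t) + ρ ^ 2) ≠ 0 := ne_of_gt hD
      have hπ : π ≠ 0 := Real.pi_ne_zero
      rw [hden, hnum]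
      calc ρ * ((1 + ρ ^ 2) * Real.cos (t_x - t) - 2 * ρ) /
            (1 - 2 * ρ * Real.cos (t_x - t) + ρ ^ 2) ^ 2 * (c * Real.cos (n * (t_z - t)))
          = (ρ * c) * (((1 + ρ ^ 2) * Real.cos (t_x - t) - 2 * ρ) /
              (1 - 2 * ρ * Real.cos (t_x - t) + ρ ^ 2) ^ 2 * Real.cos (n * (t_z - t))) := by
            ring
        _ = (1 / (2 * π * R ^ 2)) * (((1 + ρ ^ 2) * Real.cos (t_x - t) - 2 * ρ) /
              (1 - 2 * ρ * Real.cos (t_x - t) + ρ ^ 2) ^ 2 * Real.cos (n * (t_z - t))) := by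
            rw [hcρ]
        _ = (-1 / (2 * π)) * (-(R ^ 2 * ((1 + ρ ^ 2) * Real.cos (t_x - t) - 2 * ρ))) /
              (R ^ 2 * (1 - 2 * ρ * Real.cos (t_x - t) + ρ ^ 2)) ^ 2 *
              Real.cos (n * (t_z - t)) := by
            field_simp
    rw [heq] at h
    exact h
  -- summable bound
  have hb : Summable (fun k : ℕ => |c| * ((k : ℝ) * ρ ^ k)) := by
    apply Summable.mul_left
    have := (hasSum_coe_mul_geometric_of_norm_lt_one (𝕜 := ℝ)
      (r := ρ) (by rw [Real.norm_eq_abs, abs_of_nonneg hρ0]; exact hρ1)).summable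
    exact this
  have hbound : ∀ k : ℕ, ∀ t : ℝ, ‖F k t‖ ≤ |c| * ((k : ℝ) * ρ ^ k) := by
    intro k t
    have h1 : |Real.cos (k * (t_x - t))| ≤ 1 := abs_cos_le_one _
    have h2 : |Real.cos (n * (t_z - t))| ≤ 1 := abs_cos_le_one _
    have hk : (0:ℝ) ≤ (k : ℝ) * ρ ^ k := by positivity
    have h3 : |Real.cos (k * (t_x - t)) * Real.cos (n * (t_z - t))| ≤ 1 := by
      rw [abs_mul]; exact mul_le_one₀ h1 (abs_nonneg _) h2
    show |c * ((k : ℝ) * ρ ^ k) * (Real.cos (k * (t_x - t)) * Real.cos (n * (t_z - t)))|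
      ≤ |c| * ((k : ℝ) * ρ ^ k)
    calc |c * ((k:ℝ) * ρ ^ k) * (Real.cos (k * (t_x - t)) * Real.cos (n * (t_z - t)))|
        = |c| * ((k:ℝ) * ρ ^ k) * |Real.cos (k * (t_x - t)) * Real.cos (n * (t_z - t))| := by
          rw [abs_mul, abs_mul, abs_of_nonneg hk]
      _ ≤ |c| * ((k:ℝ) * ρ ^ k) * 1 := mul_le_mul_of_nonneg_left h3 (by positivity)
      _ = |c| * ((k:ℝ) * ρ ^ k) := mul_one _
  have HS : HasSum (fun k : ℕ => ∫ t in (-π)..π, F k t) (∫ t in (-π)..π, f t) := by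
    apply intervalIntegral.hasSum_integral_of_dominated_convergence
      (bound := fun (k : ℕ) (_ : ℝ) => |c| * ((k : ℝ) * ρ ^ k))
    · intro k
      apply Continuous.aestronglyMeasurable
      show Continuous fun t => c * ((k : ℝ) * ρ ^ k) *
        (Real.cos (k * (t_x - t)) * Real.cos (n * (t_z - t)))
      fun_prop
    · intro k
      filter_upwards with t _
      exact hbound k t
    · filter_upwards with t _
      exact hb
    · exact intervalIntegrable_const
    · filter_upwards with t _
      exact hpt t
  -- compute each integral
  set v : ℝ := (c * ((n : ℝ) * ρ ^ n)) * (π * Real.cos (n * t_x - n * t_z)) with hv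
  have hint : (fun k : ℕ => ∫ t in (-π)..π, F k t) = fun k => if k = n then v else 0 := by
    funext k
    show (∫ t in (-π)..π, c * ((k : ℝ) * ρ ^ k) *
        (Real.cos (k * (t_x - t)) * Real.cos (n * (t_z - t)))) = _
    rw [intervalIntegral.integral_const_mul, prodint k n hn t_x t_z]
    by_cases hkn : k = n
    · subst hkn; simp [hv]
    · simp [hkn]
  rw [hint] at HS
  have HS2 : HasSum (fun k : ℕ => if k = n then v else 0) v := hasSum_ite_eq n v
  have hval : (∫ t in (-π)..π, f t) = v := HS.unique HS2
  rw [hf] at hval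
  rw [hval, hv, hc, hρ]
  have hcosr : Real.cos ((n:ℝ) * t_x - n * t_z) = Real.cos ((n:ℝ) * (t_z - t_x)) := by
    rw [← Real.cos_neg ((n:ℝ) * t_x - n * t_z)]
    ring_nf
  rw [hcosr]
  have hπ : π ≠ 0 := Real.pi_ne_zero
  field_simp
end

section
/- For real numbers 0 < r < R, the function t ↦ (1/(2π))·log((R² + r²)/(2Rr) - cos(t)) has the Fourier cosine expansion (1/(2π))·log(R/(2r)) - (1/π)·∑_{n=1}^{∞} ((r/R)ⁿ/n)·cos(n t), with the series converging pointwise for every t ∈ ℝ. -/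
open Real

theorem stmt2 (r R : ℝ) (hr : 0 < r) (hR : r < R) (t : ℝ) :
    HasSum (fun n : ℕ => -(1 / π) * ((r / R) ^ (n + 1) / (n + 1)) * Real.cos ((n + 1) * t))
      ((1 / (2 * π)) * Real.log ((R ^ 2 + r ^ 2) / (2 * R * r) - Real.cos t)
        - (1 / (2 * π)) * Real.log (R / (2 * r))) := by
  have hR0 : 0 < R := hr.trans hR
  set q : ℝ := r / R with hqdef
  have hq0 : 0 < q := div_pos hr hR0
  have hq1 : q < 1 := (div_lt_one hR0).2 hR
  set S : ℝ := 1 - 2 * q * Real.cos t + q ^ 2 with hSdef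
  have hS : 0 < S := by
    have h1 : Real.cos t ≤ 1 := Real.cos_le_one t
    nlinarith [sq_nonneg (1 - q)]
  set z : ℂ := (q : ℂ) * Complex.exp (t * Complex.I) with hzdef
  have hznorm : ‖z‖ < 1 := by
    rw [hzdef, norm_mul, Complex.norm_exp_ofReal_mul_I,
      mul_one, Complex.norm_real, Real.norm_of_nonneg hq0.le]
    exact hq1
  have hsum := Complex.hasSum_taylorSeries_neg_log hznorm
  have hsum1 : HasSum (fun n : ℕ => z ^ (n + 1) / (n + 1)) (-Complex.log (1 - z)) := by
    have h := (hasSum_nat_add_iff' (f := fun n : ℕ => z ^ n / (n : ℂ)) 1).2 hsum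
    simpa using h
  have hre := Complex.hasSum_re hsum1
  have hterm : ∀ n : ℕ, (z ^ (n + 1) / ((n : ℂ) + 1)).re
      = q ^ (n + 1) / (n + 1) * Real.cos ((n + 1) * t) := by
    intro n
    have : z ^ (n + 1) / ((n : ℂ) + 1)
        = ((q ^ (n + 1) / (n + 1) : ℝ) : ℂ) * Complex.exp (((n + 1 : ℝ) * t : ℝ) * Complex.I) := by
      rw [hzdef, mul_pow, ← Complex.exp_nat_mul]
      push_cast
      ring
    rw [this, Complex.re_ofReal_mul, Complex.exp_ofReal_mul_I_re]
  have h1z : ((1 : ℂ) - z).re = 1 - q * Real.cos t := by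
    simp [hzdef, Complex.exp_ofReal_mul_I_re]
  have h1zim : ((1 : ℂ) - z).im = -(q * Real.sin t) := by
    simp [hzdef, Complex.exp_mul_I, Complex.sin_ofReal_re]
  have h1zne : (1 : ℂ) - z ≠ 0 := by
    refine sub_ne_zero.2 fun h => ?_
    rw [← h] at hznorm
    simp at hznorm
  have hlogre : (Complex.log (1 - z)).re = 1 / 2 * Real.log S := by
    rw [Complex.log_re, show (1 : ℝ) / 2 * Real.log S = Real.log (Real.sqrt S) by
      rw [Real.log_sqrt hS.le]; ring]
    congr 1
    rw [Complex.norm_def]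
    congr 1
    rw [Complex.normSq_apply, h1z, h1zim, hSdef]
    nlinarith [Real.sin_sq_add_cos_sq t]
  have hfin := hre.mul_left (-(1 / π))
  have hfact : (R ^ 2 + r ^ 2) / (2 * R * r) - Real.cos t = (R / (2 * r)) * S := by
    rw [hSdef, hqdef]
    field_simp
    ring
  have hfun : (fun n : ℕ => -(1 / π) * ((r / R) ^ (n + 1) / (n + 1)) * Real.cos ((n + 1) * t))
      = fun n : ℕ => -(1 / π) * (z ^ (n + 1) / ((n : ℂ) + 1)).re := by
    funext n
    rw [hterm n, ← hqdef]
    push_cast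
    ring
  have hval : (1 / (2 * π)) * Real.log ((R ^ 2 + r ^ 2) / (2 * R * r) - Real.cos t)
      - (1 / (2 * π)) * Real.log (R / (2 * r)) = -(1 / π) * (-Complex.log (1 - z)).re := by
    rw [Complex.neg_re, hlogre, hfact, Real.log_mul (by positivity) hS.ne']
    ring
  rw [hfun, hval]
  exact hfin
end

section
/- For a 2π-periodic continuously differentiable function φ : ℝ → ℂ and τ ∈ ℝ, the limit lim_{h→0⁺} (1/(2π)) ∫₀^{2π} sin(t - τ)/(2·sin²((t - τ)/2) + h) · φ(t) dt exists and equals the principal value (1/(2π)) p.v. ∫₀^{2π} φ(t)·cot((t - τ)/2) dt, i.e. the limit as ε→0⁺ of (1/(2π)) ∫_{ε < |t - τ| < π} φ(t)·cot((t - τ)/2) dt. -/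
open Real Filter Topology MeasureTheory

set_option maxHeartbeats 1000000


lemma aux_one_sub_cos (s : ℝ) : 1 - Real.cos s = 2 * Real.sin (s / 2) ^ 2 := by
  have h := Real.sin_sq_eq_half_sub (s / 2)
  have h2 : 2 * (s / 2) = s := by ring
  rw [h2] at h
  linarith

lemma aux_log_int : IntervalIntegrable Real.log MeasureTheory.volume 0 1 := by
  have hcont : ContinuousOn (fun x : ℝ => x - x * Real.log x) (Set.Icc 0 1) :=
    (continuous_id.sub Real.continuous_mul_log).continuousOn
  have hderiv : ∀ x ∈ Set.Ioo (0:ℝ) 1,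
      HasDerivAt (fun x : ℝ => x - x * Real.log x) (-Real.log x) x := by
    intro x hx
    have := (hasDerivAt_id x).sub (Real.hasDerivAt_mul_log (ne_of_gt hx.1))
    have e : -Real.log x = 1 - (Real.log x + 1) := by ring
    rw [e]; exact this
  have hpos : ∀ x ∈ Set.Ioo (0:ℝ) 1, 0 ≤ -Real.log x := by
    intro x hx
    have := Real.log_nonpos (le_of_lt hx.1) (le_of_lt hx.2)
    linarith
  have h : IntegrableOn (fun x : ℝ => -Real.log x) (Set.Ioc (0:ℝ) 1) :=
    intervalIntegral.integrableOn_deriv_of_nonneg hcont hderiv hpos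
  rw [intervalIntegrable_iff_integrableOn_Ioc_of_le (by norm_num)]
  exact h.neg.congr (Filter.Eventually.of_forall fun x => by simp)

lemma aux_abslog_int :
    IntervalIntegrable (fun x : ℝ => |Real.log x|) MeasureTheory.volume 0 π := by
  have h1 : IntervalIntegrable (fun x : ℝ => |Real.log x|) MeasureTheory.volume 0 1 :=
    aux_log_int.abs
  have h2 : IntervalIntegrable (fun x : ℝ => |Real.log x|) MeasureTheory.volume 1 π := by
    apply ContinuousOn.intervalIntegrable
    apply ContinuousOn.abs
    apply Real.continuousOn_log.mono
    intro x hx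
    simp only [Set.mem_uIcc] at hx
    have := Real.pi_gt_three
    simp only [Set.mem_compl_iff, Set.mem_singleton_iff]
    rcases hx with h | h
    · intro h0; rw [h0] at h; linarith [h.1]
    · intro h0; rw [h0] at h; linarith [h.2]
  exact h1.trans h2

lemma aux_abslogabs_int :
    IntervalIntegrable (fun x : ℝ => |Real.log (abs x)|) MeasureTheory.volume (-π) π := by
  have hneg : IntervalIntegrable (fun x : ℝ => |Real.log (abs x)|)
      MeasureTheory.volume (-π) 0 := by
    have h1 := (IntervalIntegrable.iff_comp_neg (f := fun x : ℝ => |Real.log x|)).mp aux_abslog_int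
    simp only [neg_zero] at h1
    apply h1.symm.congr_ae
    filter_upwards with x
    rw [Real.log_abs, Real.log_neg_eq_log]
  have hpos : IntervalIntegrable (fun x : ℝ => |Real.log (abs x)|)
      MeasureTheory.volume 0 π := by
    apply aux_abslog_int.congr_ae
    filter_upwards with x
    rw [Real.log_abs]
  exact hneg.trans hpos

lemma aux_translate (τ : ℝ) :
    IntervalIntegrable (fun t : ℝ => |Real.log (abs (t - τ))|)
      MeasureTheory.volume (τ - π) (τ + π) := by
  have := aux_abslogabs_int.comp_sub_right τ
  have e1 : -π + τ = τ - π := by ring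
  have e2 : π + τ = τ + π := by ring
  rwa [e1, e2] at this

lemma aux_lower {s : ℝ} (h1 : |s| ≤ π) (h2 : s ≠ 0) : 2 * (s / π) ^ 2 ≤ 1 - Real.cos s := by
  have hπ := Real.pi_pos
  rw [aux_one_sub_cos]
  have hs2 : Real.sin (s / 2) ^ 2 = Real.sin (|s| / 2) ^ 2 := by
    rcases abs_cases s with ⟨h, _⟩ | ⟨h, _⟩
    · rw [h]
    · rw [h, neg_div, Real.sin_neg, neg_sq]
  have hb : |s| / π ≤ Real.sin (|s| / 2) := by
    have hm := Real.mul_le_sin (x := |s| / 2) (by positivity) (by linarith)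
    calc |s| / π = 2 / π * (|s| / 2) := by field_simp
    _ ≤ Real.sin (|s| / 2) := hm
  have hb0 : 0 ≤ |s| / π := by positivity
  have hsq : (|s| / π) ^ 2 ≤ Real.sin (|s| / 2) ^ 2 := by nlinarith
  have he : (|s| / π) ^ 2 = (s / π) ^ 2 := by
    rw [div_pow, div_pow, sq_abs]
  rw [hs2]
  rw [he] at hsq
  linarith

lemma aux_pos {s : ℝ} (h1 : |s| ≤ π) (h2 : s ≠ 0) : 0 < 1 - Real.cos s := by
  have hπ := Real.pi_pos
  have h3 : s / π ≠ 0 := div_ne_zero h2 (ne_of_gt hπ)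
  have := aux_lower h1 h2
  have h4 : 0 < (s / π) ^ 2 := by positivity
  linarith

lemma aux_sandwich {s h : ℝ} (h1 : |s| ≤ π) (h2 : s ≠ 0) (hh0 : 0 ≤ h) (hh1 : h ≤ 1) :
    |Real.log (1 - Real.cos s + h)| ≤
      2 * |Real.log (abs s)| + Real.log (π ^ 2 / 2) + Real.log 3 := by
  have hπ := Real.pi_pos
  have hπ3 := Real.pi_gt_three
  have hlow := aux_lower h1 h2
  have hcpos := aux_pos h1 h2
  have habs : (0:ℝ) < |s| := abs_pos.mpr h2
  have hpos : (0:ℝ) < 2 * (s / π) ^ 2 := by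
    have h3 : s / π ≠ 0 := div_ne_zero h2 (ne_of_gt hπ)
    positivity
  have hup : 1 - Real.cos s + h ≤ 3 := by
    have := Real.neg_one_le_cos s
    linarith
  have hlog3 : (0:ℝ) ≤ Real.log 3 := Real.log_nonneg (by norm_num)
  have hlogpi : (0:ℝ) ≤ Real.log (π ^ 2 / 2) := Real.log_nonneg (by nlinarith)
  have habsnn := abs_nonneg (Real.log (abs s))
  rw [abs_le]
  constructor
  · have l1 : Real.log (2 * (s / π) ^ 2) ≤ Real.log (1 - Real.cos s + h) :=
      Real.log_le_log (by linarith) (by linarith)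
    have l2 : Real.log (2 * (s / π) ^ 2) = 2 * Real.log (abs s) - Real.log (π ^ 2 / 2) := by
      have e : 2 * (s / π) ^ 2 = |s| ^ 2 / (π ^ 2 / 2) := by
        rw [← sq_abs, abs_div, abs_of_pos hπ]
        field_simp
      rw [e, Real.log_div (by positivity) (by positivity), Real.log_pow]
      push_cast
      ring
    have l3 : -|Real.log (abs s)| ≤ Real.log (abs s) := neg_abs_le _
    linarith
  · have u1 : Real.log (1 - Real.cos s + h) ≤ Real.log 3 :=
      Real.log_le_log (by linarith) hup
    linarith

lemma aux_hasDerivAt_inner (τ h t : ℝ) :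
    HasDerivAt (fun t : ℝ => 1 - Real.cos (t - τ) + h) (Real.sin (t - τ)) t := by
  have h1 : HasDerivAt (fun t : ℝ => t - τ) 1 t := (hasDerivAt_id t).sub_const τ
  have h2 : HasDerivAt (fun t : ℝ => Real.cos (t - τ)) (-Real.sin (t - τ) * 1) t :=
    HasDerivAt.comp (h₂ := Real.cos) t (Real.hasDerivAt_cos (t - τ)) h1
  have h3 := ((hasDerivAt_const t (1:ℝ)).sub h2).add_const h
  have e : Real.sin (t - τ) = 0 - -Real.sin (t - τ) * 1 := by ring
  rw [e]; exact h3

lemma aux_hasDerivAt_gh {h : ℝ} (hh : 0 < h) (τ t : ℝ) :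
    HasDerivAt (fun t : ℝ => Real.log (1 - Real.cos (t - τ) + h))
      (Real.sin (t - τ) / (2 * Real.sin ((t - τ) / 2) ^ 2 + h)) t := by
  have hne : 1 - Real.cos (t - τ) + h ≠ 0 := by
    have := Real.cos_le_one (t - τ)
    intro h0
    rw [← h0] at hh
    linarith
  have := (aux_hasDerivAt_inner τ h t).log hne
  rwa [show 1 - Real.cos (t - τ) + h = 2 * Real.sin ((t - τ) / 2) ^ 2 + h by
    rw [aux_one_sub_cos]] at this

lemma aux_sin_half_ne {s : ℝ} (h1 : |s| ≤ π) (h2 : s ≠ 0) : Real.sin (s / 2) ≠ 0 := by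
  have := aux_pos h1 h2
  rw [aux_one_sub_cos] at this
  intro h0
  rw [h0] at this
  norm_num at this

lemma aux_hasDerivAt_g {τ t : ℝ} (h1 : |t - τ| ≤ π) (h2 : t - τ ≠ 0) :
    HasDerivAt (fun t : ℝ => Real.log (1 - Real.cos (t - τ)))
      (Real.cos ((t - τ) / 2) / Real.sin ((t - τ) / 2)) t := by
  have hpos := aux_pos h1 h2
  have hne : 1 - Real.cos (t - τ) + 0 ≠ 0 := by rw [add_zero]; linarith
  have hd := (aux_hasDerivAt_inner τ 0 t).log hne
  have hsne := aux_sin_half_ne h1 h2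
  have heq : Real.sin (t - τ) / (1 - Real.cos (t - τ) + 0) =
      Real.cos ((t - τ) / 2) / Real.sin ((t - τ) / 2) := by
    rw [add_zero, aux_one_sub_cos, show t - τ = 2 * ((t - τ) / 2) by ring, Real.sin_two_mul]
    rw [show 2 * ((t - τ) / 2) / 2 = (t - τ) / 2 by ring]
    field_simp
  rw [heq] at hd
  convert hd using 2
  rw [add_zero]

theorem stmt7 (φ : ℝ → ℂ) (hper : Function.Periodic φ (2 * π)) (hφ : ContDiff ℝ 1 φ)
    (τ : ℝ) :
    ∃ L : ℂ,
      Tendsto (fun h : ℝ =>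
          (1 / (2 * π) : ℂ) * ∫ t in (0:ℝ)..(2 * π),
            ((Real.sin (t - τ) / (2 * Real.sin ((t - τ) / 2) ^ 2 + h) : ℝ) : ℂ) * φ t)
        (𝓝[>] 0) (𝓝 L) ∧
      Tendsto (fun ε : ℝ =>
          (1 / (2 * π) : ℂ) * ∫ t in {t : ℝ | ε < |t - τ| ∧ |t - τ| < π},
            φ t * ((Real.cos ((t - τ) / 2) / Real.sin ((t - τ) / 2) : ℝ) : ℂ))
        (𝓝[>] 0) (𝓝 L) := by
  have hπ := Real.pi_pos
  set ψ : ℝ → ℂ := deriv φ with hψdef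
  have hψc : Continuous ψ := hφ.continuous_deriv le_rfl
  have hder : ∀ t, HasDerivAt φ (ψ t) t := fun t => ((hφ.differentiable one_ne_zero) t).hasDerivAt
  set gC : ℝ → ℂ := fun t => ((Real.log (1 - Real.cos (t - τ)) : ℝ) : ℂ) with hgCdef
  set I : ℝ → ℂ := fun x => ∫ t in (τ - π)..x, ψ t * gC t with hIdef
  set T : ℂ := I (τ + π) with hTdef
  obtain ⟨M, hM⟩ :=
    (isCompact_Icc (a := τ - π) (b := τ + π)).exists_bound_of_continuousOn hψc.continuousOn
  have hM0 : 0 ≤ M := le_trans (norm_nonneg _) (hM τ ⟨by linarith, by linarith⟩)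
  set G : ℝ → ℝ :=
    fun t => M * (2 * |Real.log (abs (t - τ))| + Real.log (π ^ 2 / 2) + Real.log 3) with hGdef
  have hGint : IntervalIntegrable G MeasureTheory.volume (τ - π) (τ + π) :=
    ((((aux_translate τ).const_mul 2).add (intervalIntegrable_const)).add
      intervalIntegrable_const).const_mul M
  have hae : ∀ᵐ t : ℝ, t ≠ τ := by
    rw [MeasureTheory.ae_iff]
    have he : {a : ℝ | ¬a ≠ τ} = {τ} := by ext t; simp
    rw [he]
    exact measure_singleton τ
  have hmem_abs : ∀ t ∈ Set.Icc (τ - π) (τ + π), |t - τ| ≤ π := by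
    intro t ht
    rw [abs_le]
    exact ⟨by linarith [ht.1], by linarith [ht.2]⟩
  have hphi : φ (τ + π) = φ (τ - π) := by
    rw [show τ + π = (τ - π) + 2 * π by ring, hper]
  refine ⟨(1 / (2 * π) : ℂ) * (-T), ?_, ?_⟩
  · -- Part A
    have hAconv : Tendsto (fun h : ℝ => ∫ t in (τ - π)..(τ + π),
        ψ t * ((Real.log (1 - Real.cos (t - τ) + h) : ℝ) : ℂ)) (𝓝[>] 0) (𝓝 T) := by
      have hTeq : T = ∫ t in (τ - π)..(τ + π), ψ t * gC t := rfl
      rw [hTeq]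
      apply intervalIntegral.tendsto_integral_filter_of_dominated_convergence G
      · filter_upwards [self_mem_nhdsWithin] with h hh
        have hh' : (0:ℝ) < h := hh
        have hcont : Continuous fun t : ℝ => Real.log (1 - Real.cos (t - τ) + h) := by
          rw [continuous_iff_continuousAt]
          intro t
          have harg : Continuous fun t : ℝ => 1 - Real.cos (t - τ) + h := by fun_prop
          apply ContinuousAt.comp (Real.continuousAt_log ?_) harg.continuousAt
          have := Real.cos_le_one (t - τ)
          intro h0
          linarith [h0]
        exact (hψc.mul (Complex.continuous_ofReal.comp hcont)).aestronglyMeasurable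
      · filter_upwards [Ioc_mem_nhdsGT_of_mem
          (Set.left_mem_Ico.mpr one_pos : (0:ℝ) ∈ Set.Ico 0 1)] with h hh
        filter_upwards [hae] with t ht htm
        have htm' : t ∈ Set.Icc (τ - π) (τ + π) := by
          rw [Set.uIoc_of_le (by linarith : τ - π ≤ τ + π)] at htm
          exact ⟨le_of_lt htm.1, htm.2⟩
        have h2 : t - τ ≠ 0 := sub_ne_zero.mpr ht
        rw [norm_mul, Complex.norm_real, Real.norm_eq_abs]
        exact mul_le_mul (hM t htm')
          (aux_sandwich (hmem_abs t htm') h2 (le_of_lt hh.1) hh.2) (abs_nonneg _) hM0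
      · exact hGint
      · filter_upwards [hae] with t ht htm
        have htm' : t ∈ Set.Icc (τ - π) (τ + π) := by
          rw [Set.uIoc_of_le (by linarith : τ - π ≤ τ + π)] at htm
          exact ⟨le_of_lt htm.1, htm.2⟩
        have h2 : t - τ ≠ 0 := sub_ne_zero.mpr ht
        have hcpos : 0 < 1 - Real.cos (t - τ) := aux_pos (hmem_abs t htm') h2
        have hcont : ContinuousAt (fun h : ℝ => Real.log (1 - Real.cos (t - τ) + h)) 0 := by
          apply ContinuousAt.comp (Real.continuousAt_log ?_)
            (Continuous.continuousAt (by fun_prop : Continuous fun h : ℝ => 1 - Real.cos (t - τ) + h))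
          rw [add_zero]
          exact ne_of_gt hcpos
        have hten : Tendsto (fun h : ℝ => Real.log (1 - Real.cos (t - τ) + h)) (𝓝[>] 0)
            (𝓝 (Real.log (1 - Real.cos (t - τ) + 0))) :=
          hcont.tendsto.mono_left nhdsWithin_le_nhds
        rw [add_zero] at hten
        exact tendsto_const_nhds.mul ((Complex.continuous_ofReal.tendsto _).comp hten)
    have hEq : ∀ᶠ h : ℝ in 𝓝[>] 0,
        (1 / (2 * π) : ℂ) *
          -(∫ t in (τ - π)..(τ + π), ψ t * ((Real.log (1 - Real.cos (t - τ) + h) : ℝ) : ℂ))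
        = (1 / (2 * π) : ℂ) * ∫ t in (0:ℝ)..(2 * π),
            ((Real.sin (t - τ) / (2 * Real.sin ((t - τ) / 2) ^ 2 + h) : ℝ) : ℂ) * φ t := by
      filter_upwards [self_mem_nhdsWithin] with h hh
      have hh' : (0:ℝ) < h := hh
      congr 1
      have hFper : Function.Periodic
          (fun t : ℝ => ((Real.sin (t - τ) / (2 * Real.sin ((t - τ) / 2) ^ 2 + h) : ℝ) : ℂ) * φ t)
          (2 * π) := by
        intro x
        have e1 : x + 2 * π - τ = (x - τ) + 2 * π := by ring
        have e2 : (x - τ + 2 * π) / 2 = (x - τ) / 2 + π := by ring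
        simp only [e1, e2, Real.sin_add_two_pi, Real.sin_add_pi, neg_sq, hper x]
      have hshift := hFper.intervalIntegral_add_eq 0 (τ - π)
      rw [zero_add, show τ - π + 2 * π = τ + π by ring] at hshift
      rw [hshift]
      rw [intervalIntegral.integral_congr
        (g := fun t => φ t * ((Real.sin (t - τ) / (2 * Real.sin ((t - τ) / 2) ^ 2 + h) : ℝ) : ℂ))
        (fun t _ => mul_comm _ _)]
      have hv'cont : Continuous
          (fun t : ℝ => ((Real.sin (t - τ) / (2 * Real.sin ((t - τ) / 2) ^ 2 + h) : ℝ) : ℂ)) := by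
        apply Complex.continuous_ofReal.comp
        apply Continuous.div (by fun_prop) (by fun_prop)
        intro x
        have := sq_nonneg (Real.sin ((x - τ) / 2))
        intro h0
        nlinarith
      have hIBP := intervalIntegral.integral_mul_deriv_eq_deriv_mul
        (u := φ) (v := fun t => ((Real.log (1 - Real.cos (t - τ) + h) : ℝ) : ℂ))
        (u' := ψ)
        (v' := fun t => ((Real.sin (t - τ) / (2 * Real.sin ((t - τ) / 2) ^ 2 + h) : ℝ) : ℂ))
        (a := τ - π) (b := τ + π)
        (fun x _ => hder x) (fun x _ => (aux_hasDerivAt_gh hh' τ x).ofReal_comp)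
        (hψc.intervalIntegrable _ _) (hv'cont.intervalIntegrable _ _)
      rw [hIBP]
      beta_reduce
      rw [show τ + π - τ = π by ring, show τ - π - τ = -π by ring,
        Real.cos_pi, Real.cos_neg, Real.cos_pi, hphi]
      ring
    exact Tendsto.congr' hEq ((hAconv.neg).const_mul (1 / (2 * π) : ℂ))
  · -- Part B
    have hu : Set.uIcc (τ - π) (τ + π) = Set.Icc (τ - π) (τ + π) := Set.uIcc_of_le (by linarith)
    have hTicc : IntegrableOn (fun t => ψ t * gC t) (Set.Icc (τ - π) (τ + π)) := by
      have hm : Measurable gC := by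
        apply Complex.measurable_ofReal.comp
        apply Real.measurable_log.comp
        fun_prop
      have hmeas : AEStronglyMeasurable (fun t => ψ t * gC t)
          (MeasureTheory.volume.restrict (Set.Icc (τ - π) (τ + π))) :=
        (hψc.aestronglyMeasurable.mul hm.aestronglyMeasurable).restrict
      have hGicc : IntegrableOn G (Set.Icc (τ - π) (τ + π)) := by
        have h1 := hGint
        rwa [intervalIntegrable_iff_integrableOn_Icc_of_le (by linarith)] at h1
      apply Integrable.mono' hGicc hmeas
      filter_upwards [MeasureTheory.ae_restrict_mem measurableSet_Icc,
        MeasureTheory.ae_restrict_of_ae hae] with t htm ht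
      have h2 : t - τ ≠ 0 := sub_ne_zero.mpr ht
      have hsw := aux_sandwich (hmem_abs t htm) h2 (le_refl 0) zero_le_one
      rw [add_zero] at hsw
      rw [norm_mul, Complex.norm_real, Real.norm_eq_abs]
      exact mul_le_mul (hM t htm) hsw (abs_nonneg _) hM0
    have hsub2 : ∀ a b : ℝ, a ∈ Set.Icc (τ - π) (τ + π) → b ∈ Set.Icc (τ - π) (τ + π) →
        IntervalIntegrable (fun t => ψ t * gC t) MeasureTheory.volume a b := by
      intro a b ha hb
      apply IntegrableOn.intervalIntegrable
      apply hTicc.mono_set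
      rw [← hu]
      exact Set.uIcc_subset_uIcc (by rw [hu]; exact ha) (by rw [hu]; exact hb)
    have hIcont : ContinuousOn I (Set.Icc (τ - π) (τ + π)) := by
      have h1 := intervalIntegral.continuousOn_primitive_interval
        (f := fun t => ψ t * gC t) (a := τ - π) (b := τ + π) (μ := MeasureTheory.volume)
        (by rwa [hu])
      rwa [hu] at h1
    have hmemτ : τ ∈ Set.Icc (τ - π) (τ + π) := ⟨by linarith, by linarith⟩
    have hIoomem : Set.Ioo (0:ℝ) π ∈ 𝓝[>] (0:ℝ) := Ioo_mem_nhdsGT_of_mem ⟨le_refl 0, hπ⟩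
    have htends1 : Tendsto (fun ε : ℝ => τ - ε) (𝓝[>] 0) (𝓝[Set.Icc (τ - π) (τ + π)] τ) := by
      rw [tendsto_nhdsWithin_iff]
      constructor
      · have h1 : Tendsto (fun ε : ℝ => τ - ε) (𝓝 0) (𝓝 (τ - 0)) :=
          tendsto_const_nhds.sub tendsto_id
        rw [sub_zero] at h1
        exact h1.mono_left nhdsWithin_le_nhds
      · filter_upwards [hIoomem] with ε hε
        exact ⟨by linarith [hε.2], by linarith [hε.1]⟩
    have htends2 : Tendsto (fun ε : ℝ => τ + ε) (𝓝[>] 0) (𝓝[Set.Icc (τ - π) (τ + π)] τ) := by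
      rw [tendsto_nhdsWithin_iff]
      constructor
      · have h1 : Tendsto (fun ε : ℝ => τ + ε) (𝓝 0) (𝓝 (τ + 0)) :=
          tendsto_const_nhds.add tendsto_id
        rw [add_zero] at h1
        exact h1.mono_left nhdsWithin_le_nhds
      · filter_upwards [hIoomem] with ε hε
        exact ⟨by linarith [hε.1], by linarith [hε.2]⟩
    have hI1 : Tendsto (fun ε : ℝ => I (τ - ε)) (𝓝[>] 0) (𝓝 (I τ)) :=
      Tendsto.comp (hIcont τ hmemτ) htends1
    have hI2 : Tendsto (fun ε : ℝ => I (τ + ε)) (𝓝[>] 0) (𝓝 (I τ)) :=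
      Tendsto.comp (hIcont τ hmemτ) htends2
    have hBd : Tendsto (fun ε : ℝ => (φ (τ - ε) - φ (τ + ε)) *
        ((Real.log (1 - Real.cos ε) : ℝ) : ℂ)) (𝓝[>] 0) (𝓝 0) := by
      have hbound : ∀ᶠ ε in 𝓝[>] (0:ℝ),
          ‖(φ (τ - ε) - φ (τ + ε)) * ((Real.log (1 - Real.cos ε) : ℝ) : ℂ)‖ ≤
            M * (2 * ε) * (2 * |Real.log ε| + (Real.log (π ^ 2 / 2) + Real.log 3)) := by
        filter_upwards [hIoomem] with ε hε
        have hεπ : |ε| ≤ π := by rw [abs_of_pos hε.1]; linarith [hε.2]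
        have hεne : ε ≠ 0 := ne_of_gt hε.1
        have hsw := aux_sandwich (s := ε) (h := 0) hεπ hεne (le_refl 0) zero_le_one
        rw [add_zero, abs_of_pos hε.1] at hsw
        have hLip : ‖φ (τ - ε) - φ (τ + ε)‖ ≤ M * (2 * ε) := by
          have hx : τ + ε ∈ Set.Icc (τ - π) (τ + π) :=
            ⟨by linarith [hε.1], by linarith [hε.2]⟩
          have hy : τ - ε ∈ Set.Icc (τ - π) (τ + π) :=
            ⟨by linarith [hε.2], by linarith [hε.1]⟩
          have hmvt := Convex.norm_image_sub_le_of_norm_hasDerivWithin_le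
            (f := φ) (f' := ψ) (C := M) (s := Set.Icc (τ - π) (τ + π))
            (fun x _ => (hder x).hasDerivWithinAt) hM (convex_Icc _ _) hx hy
          calc ‖φ (τ - ε) - φ (τ + ε)‖ ≤ M * ‖(τ - ε) - (τ + ε)‖ := hmvt
          _ = M * (2 * ε) := by
            rw [show (τ - ε) - (τ + ε) = -(2 * ε) by ring, norm_neg, Real.norm_eq_abs,
              abs_of_pos (by linarith [hε.1])]
        rw [norm_mul, Complex.norm_real, Real.norm_eq_abs]
        exact mul_le_mul hLip (by linarith) (abs_nonneg _)
          (mul_nonneg hM0 (by linarith [hε.1]))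
      apply squeeze_zero_norm' hbound
      have t1 : Tendsto (fun ε : ℝ => ε * Real.log ε) (𝓝[>] 0) (𝓝 0) := by
        have h1 := tendsto_log_mul_rpow_nhdsGT_zero one_pos
        simp only [Real.rpow_one] at h1
        exact h1.congr (fun x => mul_comm _ _)
      have t2 : Tendsto (fun ε : ℝ => ε * |Real.log ε|) (𝓝[>] 0) (𝓝 0) := by
        have hev : (fun ε : ℝ => -(ε * Real.log ε)) =ᶠ[𝓝[>] (0:ℝ)]
            (fun ε : ℝ => ε * |Real.log ε|) := by
          filter_upwards [Ioo_mem_nhdsGT_of_mem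
            (⟨le_refl 0, one_pos⟩ : (0:ℝ) ∈ Set.Ico 0 1)] with ε hε
          rw [abs_of_nonpos (Real.log_nonpos (le_of_lt hε.1) (le_of_lt hε.2))]
          ring
        have h2 := t1.neg
        rw [neg_zero] at h2
        exact Tendsto.congr' hev h2
      have hε0 : Tendsto (fun ε : ℝ => ε) (𝓝[>] (0:ℝ)) (𝓝 0) :=
        tendsto_id.mono_left nhdsWithin_le_nhds
      have comb : Tendsto (fun ε : ℝ =>
          4 * M * (ε * |Real.log ε|) + 2 * M * (Real.log (π ^ 2 / 2) + Real.log 3) * ε)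
          (𝓝[>] 0) (𝓝 0) := by
        have h3 := (t2.const_mul (4 * M)).add
          (hε0.const_mul (2 * M * (Real.log (π ^ 2 / 2) + Real.log 3)))
        simpa using h3
      exact comb.congr (fun ε => by ring)
    have hkey : ∀ᶠ ε in 𝓝[>] (0:ℝ),
        (1 / (2 * π) : ℂ) * ((φ (τ - ε) - φ (τ + ε)) * ((Real.log (1 - Real.cos ε) : ℝ) : ℂ)
          - (I (τ - ε) + (I (τ + π) - I (τ + ε))))
        = (1 / (2 * π) : ℂ) * ∫ t in {t : ℝ | ε < |t - τ| ∧ |t - τ| < π},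
            φ t * ((Real.cos ((t - τ) / 2) / Real.sin ((t - τ) / 2) : ℝ) : ℂ) := by
      filter_upwards [hIoomem] with ε hε
      congr 1
      have hSet : {t : ℝ | ε < |t - τ| ∧ |t - τ| < π} =
          Set.Ioo (τ - π) (τ - ε) ∪ Set.Ioo (τ + ε) (τ + π) := by
        ext t
        simp only [Set.mem_setOf_eq, Set.mem_union, Set.mem_Ioo, lt_abs, abs_lt]
        constructor
        · rintro ⟨h1 | h1, h2, h3⟩
          · right; exact ⟨by linarith, by linarith⟩
          · left; exact ⟨by linarith, by linarith⟩
        · rintro (⟨h1, h2⟩ | ⟨h1, h2⟩)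
          · exact ⟨Or.inr (by linarith), by linarith, by linarith [hε.1]⟩
          · exact ⟨Or.inl (by linarith), by linarith [hε.1], by linarith⟩
      rw [hSet]
      have hcotCL : ContinuousOn
          (fun t : ℝ => ((Real.cos ((t - τ) / 2) / Real.sin ((t - τ) / 2) : ℝ) : ℂ))
          (Set.Icc (τ - π) (τ - ε)) := by
        apply Complex.continuous_ofReal.comp_continuousOn
        apply ContinuousOn.div (by fun_prop) (by fun_prop)
        intro x hx
        apply aux_sin_half_ne
        · rw [abs_le]; exact ⟨by linarith [hx.1], by linarith [hx.2, hε.1]⟩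
        · intro h0; have := hx.2; have := hε.1; linarith [sub_eq_zero.mp h0]
      have hcotCR : ContinuousOn
          (fun t : ℝ => ((Real.cos ((t - τ) / 2) / Real.sin ((t - τ) / 2) : ℝ) : ℂ))
          (Set.Icc (τ + ε) (τ + π)) := by
        apply Complex.continuous_ofReal.comp_continuousOn
        apply ContinuousOn.div (by fun_prop) (by fun_prop)
        intro x hx
        apply aux_sin_half_ne
        · rw [abs_le]; exact ⟨by linarith [hx.1, hε.1], by linarith [hx.2]⟩
        · intro h0; have := hx.1; have := hε.1; linarith [sub_eq_zero.mp h0]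
      have hIntL : IntegrableOn
          (fun t : ℝ => φ t * ((Real.cos ((t - τ) / 2) / Real.sin ((t - τ) / 2) : ℝ) : ℂ))
          (Set.Ioo (τ - π) (τ - ε)) :=
        (((hφ.continuous.continuousOn).mul hcotCL).integrableOn_Icc).mono_set
          Set.Ioo_subset_Icc_self
      have hIntR : IntegrableOn
          (fun t : ℝ => φ t * ((Real.cos ((t - τ) / 2) / Real.sin ((t - τ) / 2) : ℝ) : ℂ))
          (Set.Ioo (τ + ε) (τ + π)) :=
        (((hφ.continuous.continuousOn).mul hcotCR).integrableOn_Icc).mono_set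
          Set.Ioo_subset_Icc_self
      have hdisj : Disjoint (Set.Ioo (τ - π) (τ - ε)) (Set.Ioo (τ + ε) (τ + π)) :=
        Set.disjoint_left.mpr (fun t h1 h2 => by
          have := h1.2; have := h2.1; have := hε.1; linarith)
      rw [MeasureTheory.setIntegral_union hdisj measurableSet_Ioo hIntL hIntR]
      have hL : (∫ t in Set.Ioo (τ - π) (τ - ε),
            φ t * ((Real.cos ((t - τ) / 2) / Real.sin ((t - τ) / 2) : ℝ) : ℂ))
          = ∫ t in (τ - π)..(τ - ε),
            φ t * ((Real.cos ((t - τ) / 2) / Real.sin ((t - τ) / 2) : ℝ) : ℂ) := by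
        rw [intervalIntegral.integral_of_le (by linarith [hε.2] : τ - π ≤ τ - ε),
          MeasureTheory.integral_Ioc_eq_integral_Ioo]
      have hR : (∫ t in Set.Ioo (τ + ε) (τ + π),
            φ t * ((Real.cos ((t - τ) / 2) / Real.sin ((t - τ) / 2) : ℝ) : ℂ))
          = ∫ t in (τ + ε)..(τ + π),
            φ t * ((Real.cos ((t - τ) / 2) / Real.sin ((t - τ) / 2) : ℝ) : ℂ) := by
        rw [intervalIntegral.integral_of_le (by linarith [hε.2] : τ + ε ≤ τ + π),
          MeasureTheory.integral_Ioc_eq_integral_Ioo]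
      rw [hL, hR]
      have huIccL : Set.uIcc (τ - π) (τ - ε) = Set.Icc (τ - π) (τ - ε) :=
        Set.uIcc_of_le (by linarith [hε.2])
      have huIccR : Set.uIcc (τ + ε) (τ + π) = Set.Icc (τ + ε) (τ + π) :=
        Set.uIcc_of_le (by linarith [hε.2])
      have hIBPL := intervalIntegral.integral_mul_deriv_eq_deriv_mul
        (u := φ) (v := gC) (u' := ψ)
        (v' := fun t => ((Real.cos ((t - τ) / 2) / Real.sin ((t - τ) / 2) : ℝ) : ℂ))
        (a := τ - π) (b := τ - ε)
        (fun x _ => hder x)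
        (fun x hx => by
          rw [huIccL] at hx
          exact (aux_hasDerivAt_g
            (by rw [abs_le]; exact ⟨by linarith [hx.1], by linarith [hx.2, hε.1]⟩)
            (by intro h0; have := hx.2; have := hε.1; linarith [sub_eq_zero.mp h0])).ofReal_comp)
        (hψc.intervalIntegrable _ _)
        (by apply ContinuousOn.intervalIntegrable; rw [huIccL]; exact hcotCL)
      have hIBPR := intervalIntegral.integral_mul_deriv_eq_deriv_mul
        (u := φ) (v := gC) (u' := ψ)
        (v' := fun t => ((Real.cos ((t - τ) / 2) / Real.sin ((t - τ) / 2) : ℝ) : ℂ))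
        (a := τ + ε) (b := τ + π)
        (fun x _ => hder x)
        (fun x hx => by
          rw [huIccR] at hx
          exact (aux_hasDerivAt_g
            (by rw [abs_le]; exact ⟨by linarith [hx.1, hε.1], by linarith [hx.2]⟩)
            (by intro h0; have := hx.1; have := hε.1; linarith [sub_eq_zero.mp h0])).ofReal_comp)
        (hψc.intervalIntegrable _ _)
        (by apply ContinuousOn.intervalIntegrable; rw [huIccR]; exact hcotCR)
      rw [hIBPL, hIBPR]
      have hgval1 : gC (τ + π) = ((Real.log 2 : ℝ) : ℂ) := by
        simp only [hgCdef]
        norm_num [show τ + π - τ = π by ring, Real.cos_pi]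
      have hgval2 : gC (τ - π) = ((Real.log 2 : ℝ) : ℂ) := by
        simp only [hgCdef]
        norm_num [show τ - π - τ = -π by ring, Real.cos_neg, Real.cos_pi]
      have hgval3 : gC (τ - ε) = ((Real.log (1 - Real.cos ε) : ℝ) : ℂ) := by
        simp only [hgCdef]
        rw [show τ - ε - τ = -ε by ring, Real.cos_neg]
      have hgval4 : gC (τ + ε) = ((Real.log (1 - Real.cos ε) : ℝ) : ℂ) := by
        simp only [hgCdef]
        rw [show τ + ε - τ = ε by ring]
      have hIL : I (τ - ε) = ∫ t in (τ - π)..(τ - ε), ψ t * gC t := rfl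
      have hadj : (I (τ + ε)) + (∫ t in (τ + ε)..(τ + π), ψ t * gC t) = I (τ + π) :=
        intervalIntegral.integral_add_adjacent_intervals
          (hsub2 _ _ ⟨by linarith, by linarith⟩ ⟨by linarith [hε.1], by linarith [hε.2]⟩)
          (hsub2 _ _ ⟨by linarith [hε.1], by linarith [hε.2]⟩ ⟨by linarith, by linarith⟩)
      have hIR : (∫ t in (τ + ε)..(τ + π), ψ t * gC t) = I (τ + π) - I (τ + ε) :=
        eq_sub_of_add_eq' hadj
      rw [hgval1, hgval2, hgval3, hgval4, ← hIL, hIR, hphi]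
      ring
    have hconst : Tendsto (fun _ : ℝ => I (τ + π)) (𝓝[>] (0:ℝ)) (𝓝 (I (τ + π))) :=
      tendsto_const_nhds
    have hfinal := ((hBd.sub (hI1.add (hconst.sub hI2))).const_mul (1 / (2 * π) : ℂ))
    have hvalue : (1 / (2 * π) : ℂ) * (0 - (I τ + (I (τ + π) - I τ)))
        = (1 / (2 * π) : ℂ) * -T := by
      rw [hTdef]; ring
    rw [hvalue] at hfinal
    exact Tendsto.congr' hkey hfinal
end
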